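/- Let ε > 0. The scalar regularization ρ_ε : ℝ → ℝ is twice continuously differentiable on ℝ (class C²), nonnegative, and convex. -/

import Mathlib

noncomputable def rhoEps1 (ε : ℝ) (z : ℝ) : ℝ :=
  if ε ≤ |z| then |z| - (1 - 2 / Real.pi) * ε
  else (2 * ε / Real.pi) * (1 - Real.cos (Real.pi * |z| / (2 * ε)))

/-!
On `[-ε, ε]` the function `ρ_ε` is `g y = (2ε/π)(1 - cos (π y / 2ε))`, and outside it is continued
by the tangent lines of `g` at `±ε` (where `g' = ±1`). Any such tangent-line extension of a
differentiable `g` is differentiable with derivative `g' ∘ clamp`, where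
`clamp z = max (-ε) (min ε z)`; here that is `sin (π · clamp z / 2ε)`. Because `g''` vanishes at
`±ε`, this derivative is in turn differentiable, with the continuous derivative
`(π / 2ε) cos (π · clamp z / 2ε)`, so `ρ_ε` is `C²`. It is convex because its derivative is
monotone, `sin` being increasing on `[-π/2, π/2]`.
-/

open Set Real

section Clamp

variable {α : Type*} [LinearOrder α] {a b x : α}

lemma max_min_of_le_left (hx : x ≤ a) : max a (min b x) = a :=
  max_eq_left (min_le_of_right_le hx)

lemma max_min_of_right_le (hab : a ≤ b) (hx : b ≤ x) : max a (min b x) = b := by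
  rw [min_eq_left hx, max_eq_right hab]

lemma max_min_of_mem (hx : x ∈ Icc a b) : max a (min b x) = x := by
  rw [min_eq_right hx.2, max_eq_right hx.1]

end Clamp

lemma HasDerivWithinAt.of_isClosed {𝕜 F : Type*} [NontriviallyNormedField 𝕜]
    [NormedAddCommGroup F] [NormedSpace 𝕜 F] {f : 𝕜 → F} {f' : F} {s : Set 𝕜} {x : 𝕜}
    (hs : IsClosed s) (h : x ∈ s → HasDerivWithinAt f f' s x) : HasDerivWithinAt f f' s x := by
  by_cases hx : x ∈ s
  · exact h hx
  · exact HasFDerivWithinAt.of_notMem_closure (by rwa [hs.closure_eq])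

theorem contDiff_two_of_hasDerivAt {𝕜 F : Type*} [NontriviallyNormedField 𝕜]
    [NormedAddCommGroup F] [NormedSpace 𝕜 F] {f f₁ f₂ : 𝕜 → F}
    (h₁ : ∀ x, HasDerivAt f (f₁ x) x) (h₂ : ∀ x, HasDerivAt f₁ (f₂ x) x) (hf₂ : Continuous f₂) :
    ContDiff 𝕜 2 f := by
  rw [show (2 : WithTop ℕ∞) = 1 + 1 from rfl, contDiff_succ_iff_deriv,
    funext fun x => (h₁ x).deriv, contDiff_one_iff_deriv, funext fun x => (h₂ x).deriv]
  exact ⟨fun x => (h₁ x).differentiableAt, by simp, fun x => (h₂ x).differentiableAt, hf₂⟩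

section IccTangentExtend

variable {a b x : ℝ} {f f' : ℝ → ℝ}

noncomputable def IccTangentExtend (a b : ℝ) (f f' : ℝ → ℝ) (x : ℝ) : ℝ :=
  f (max a (min b x)) + f' (max a (min b x)) * (x - max a (min b x))

lemma IccTangentExtend_of_le_left (hx : x ≤ a) :
    IccTangentExtend a b f f' x = f a + f' a * (x - a) := by
  rw [IccTangentExtend, max_min_of_le_left hx]

lemma IccTangentExtend_of_right_le (hab : a ≤ b) (hx : b ≤ x) :
    IccTangentExtend a b f f' x = f b + f' b * (x - b) := by
  rw [IccTangentExtend, max_min_of_right_le hab hx]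

lemma IccTangentExtend_of_mem (hx : x ∈ Icc a b) : IccTangentExtend a b f f' x = f x := by
  rw [IccTangentExtend, max_min_of_mem hx, sub_self, mul_zero, add_zero]

lemma hasDerivAt_const_add_mul_sub (c m x : ℝ) : HasDerivAt (fun y => c + m * (y - a)) m x := by
  simpa using ((hasDerivAt_id x).sub_const a).const_mul m |>.const_add c

theorem hasDerivAt_IccTangentExtend (hab : a ≤ b) (hf : ∀ y ∈ Icc a b, HasDerivAt f (f' y) y)
    (x : ℝ) : HasDerivAt (IccTangentExtend a b f f') (f' (max a (min b x))) x := by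
  have left : HasDerivWithinAt (IccTangentExtend a b f f') (f' (max a (min b x))) (Iic a) x :=
    .of_isClosed isClosed_Iic fun hx => by
      rw [max_min_of_le_left hx]
      exact (hasDerivAt_const_add_mul_sub _ _ x).hasDerivWithinAt.congr
        (fun y hy => IccTangentExtend_of_le_left hy) (IccTangentExtend_of_le_left hx)
  have mid : HasDerivWithinAt (IccTangentExtend a b f f') (f' (max a (min b x))) (Icc a b) x :=
    .of_isClosed isClosed_Icc fun hx => by
      rw [max_min_of_mem hx]
      exact (hf x hx).hasDerivWithinAt.congr
        (fun y hy => IccTangentExtend_of_mem hy) (IccTangentExtend_of_mem hx)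
  have right : HasDerivWithinAt (IccTangentExtend a b f f') (f' (max a (min b x))) (Ici b) x :=
    .of_isClosed isClosed_Ici fun hx => by
      rw [max_min_of_right_le hab hx]
      exact (hasDerivAt_const_add_mul_sub _ _ x).hasDerivWithinAt.congr
        (fun y hy => IccTangentExtend_of_right_le hab hy) (IccTangentExtend_of_right_le hab hx)
  have := (left.union mid).union right
  rwa [Iic_union_Icc_eq_Iic hab, Iic_union_Ici, hasDerivWithinAt_univ] at this

theorem hasDerivAt_comp_max_min (hab : a ≤ b) (hf : ∀ y ∈ Icc a b, HasDerivAt f (f' y) y)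
    (ha : f' a = 0) (hb : f' b = 0) (x : ℝ) :
    HasDerivAt (fun x => f (max a (min b x))) (f' (max a (min b x))) x := by
  convert hasDerivAt_IccTangentExtend hab hf x using 1
  funext y
  suffices f' (max a (min b y)) * (y - max a (min b y)) = 0 by
    rw [IccTangentExtend, this, add_zero]
  rcases le_or_gt y a with hya | hay
  · rw [max_min_of_le_left hya, ha, zero_mul]
  rcases le_or_gt b y with hby | hyb
  · rw [max_min_of_right_le hab hby, hb, zero_mul]
  · rw [max_min_of_mem ⟨hay.le, hyb.le⟩, sub_self, mul_zero]

end IccTangentExtend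

lemma rhoEps1_nonneg (ε z : ℝ) : 0 ≤ rhoEps1 ε z := by
  have hπ : 2 / π < 1 := by rw [div_lt_one pi_pos]; linarith [pi_gt_three]
  unfold rhoEps1
  split_ifs with h
  · have : (1 - 2 / π) * ε ≤ max ε 0 := by
      rcases le_total 0 ε with hε | hε
      · nlinarith [le_max_left ε 0, div_pos two_pos pi_pos]
      · nlinarith [le_max_right ε 0, div_pos two_pos pi_pos]
    linarith [max_le h (abs_nonneg z)]
  · have : 0 < ε := (abs_nonneg z).trans_lt (not_le.mp h)
    exact mul_nonneg (by positivity) (sub_nonneg.mpr (cos_le_one _))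

section rhoEps1

variable {ε : ℝ}

lemma pi_mul_div_two_mul_self (hε : ε ≠ 0) : π * ε / (2 * ε) = π / 2 :=
  mul_div_mul_right π 2 hε

lemma pi_mul_neg_div_two_mul_self (hε : ε ≠ 0) : π * -ε / (2 * ε) = -(π / 2) := by
  rw [mul_neg, neg_div, pi_mul_div_two_mul_self hε]

lemma hasDerivAt_pi_mul_div (ε y : ℝ) :
    HasDerivAt (fun y => π * y / (2 * ε)) (π / (2 * ε)) y := by
  simpa using ((hasDerivAt_id' y).const_mul π).div_const (2 * ε)

lemma hasDerivAt_two_mul_div_pi_mul_one_sub_cos (hε : ε ≠ 0) (y : ℝ) :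
    HasDerivAt (fun y => 2 * ε / π * (1 - cos (π * y / (2 * ε)))) (sin (π * y / (2 * ε))) y := by
  refine (((hasDerivAt_pi_mul_div ε y).cos.const_sub 1).const_mul (2 * ε / π)).congr_deriv ?_
  field_simp

lemma hasDerivAt_sin_pi_mul_div (ε y : ℝ) :
    HasDerivAt (fun y => sin (π * y / (2 * ε))) (π / (2 * ε) * cos (π * y / (2 * ε))) y := by
  simpa only [mul_comm] using (hasDerivAt_pi_mul_div ε y).sin

lemma rhoEps1_eq_IccTangentExtend (hε : 0 < ε) :
    rhoEps1 ε = IccTangentExtend (-ε) ε (fun y => 2 * ε / π * (1 - cos (π * y / (2 * ε))))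
      (fun y => sin (π * y / (2 * ε))) := by
  funext z
  unfold rhoEps1
  split_ifs with h
  · rcases le_abs'.mp h with hz | hz
    · rw [IccTangentExtend_of_le_left hz, abs_of_neg (by linarith),
        pi_mul_neg_div_two_mul_self hε.ne', cos_neg, sin_neg, cos_pi_div_two, sin_pi_div_two]
      field_simp
      ring
    · rw [IccTangentExtend_of_right_le (by linarith) hz, abs_of_pos (by linarith),
        pi_mul_div_two_mul_self hε.ne', cos_pi_div_two, sin_pi_div_two]
      field_simp
      ring
  · obtain ⟨hz₁, hz₂⟩ := abs_le.mp (not_le.mp h).le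
    rw [IccTangentExtend_of_mem ⟨hz₁, hz₂⟩, ← cos_abs (π * z / (2 * ε)), abs_div, abs_mul,
      abs_of_pos pi_pos, abs_of_pos (by positivity : 0 < 2 * ε)]

noncomputable def rhoEps1Deriv (ε z : ℝ) : ℝ := sin (π * max (-ε) (min ε z) / (2 * ε))

lemma hasDerivAt_rhoEps1 (hε : 0 < ε) (z : ℝ) : HasDerivAt (rhoEps1 ε) (rhoEps1Deriv ε z) z := by
  rw [rhoEps1_eq_IccTangentExtend hε]
  exact hasDerivAt_IccTangentExtend (by linarith)
    (fun y _ => hasDerivAt_two_mul_div_pi_mul_one_sub_cos hε.ne' y) z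

lemma hasDerivAt_rhoEps1Deriv (hε : 0 < ε) (z : ℝ) :
    HasDerivAt (rhoEps1Deriv ε) (π / (2 * ε) * cos (π * max (-ε) (min ε z) / (2 * ε))) z := by
  refine hasDerivAt_comp_max_min (by linarith) (fun y _ => hasDerivAt_sin_pi_mul_div ε y) ?_ ?_ z
  · rw [pi_mul_neg_div_two_mul_self hε.ne', cos_neg, cos_pi_div_two, mul_zero]
  · rw [pi_mul_div_two_mul_self hε.ne', cos_pi_div_two, mul_zero]

lemma pi_mul_max_min_div_mem_Icc (hε : 0 < ε) (z : ℝ) :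
    π * max (-ε) (min ε z) / (2 * ε) ∈ Icc (-(π / 2)) (π / 2) := by
  rw [← pi_mul_neg_div_two_mul_self hε.ne', ← pi_mul_div_two_mul_self hε.ne']
  constructor <;> gcongr
  · exact le_max_left _ _
  · exact max_le (by linarith) (min_le_left _ _)

lemma monotone_rhoEps1Deriv (hε : 0 < ε) : Monotone (rhoEps1Deriv ε) := fun x y hxy =>
  strictMonoOn_sin.monotoneOn (pi_mul_max_min_div_mem_Icc hε x) (pi_mul_max_min_div_mem_Icc hε y)
    (by gcongr)

end rhoEps1

/-- the scalar regularization `ρ_ε : ℝ → ℝ` is of class `C²`,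
nonnegative, and convex. -/
theorem rhoEps1_contDiff_nonneg_convex (ε : ℝ) (hε : 0 < ε) :
    ContDiff ℝ 2 (rhoEps1 ε) ∧ (∀ z : ℝ, 0 ≤ rhoEps1 ε z) ∧
      ConvexOn ℝ Set.univ (rhoEps1 ε) := by
  have hρ' := hasDerivAt_rhoEps1 hε
  refine ⟨contDiff_two_of_hasDerivAt hρ' (hasDerivAt_rhoEps1Deriv hε) (by fun_prop),
    rhoEps1_nonneg ε, ?_⟩
  refine Monotone.convexOn_univ_of_deriv (fun z => (hρ' z).differentiableAt) ?_
  rw [funext fun z => (hρ' z).deriv]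
  exact monotone_rhoEps1Deriv hε
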